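/- (Lemma 2: W₀χ = W₀.) If χ ∈ W₀ and χ(z) is an invertible matrix for every z ∈ ℂ ∖ Λ, then the set of pointwise products { z ↦ X(z) · χ(z) : X ∈ W₀ } (as functions on ℂ ∖ Λ) is equal to W₀ (restricted to ℂ ∖ Λ). -/

import Mathlib

noncomputable section

open Filter Topology

attribute [local instance] Matrix.normedAddCommGroup Matrix.normedSpace

/-- The Pauli matrix σ₁. -/
def σ1 : Matrix (Fin 2) (Fin 2) ℂ := !![0, 1; 1, 0]

/-- The Pauli matrix σ₂. -/
def σ2 : Matrix (Fin 2) (Fin 2) ℂ := !![0, -Complex.I; Complex.I, 0]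

/-- The Pauli matrix σ₃. -/
def σ3 : Matrix (Fin 2) (Fin 2) ℂ := !![1, 0; 0, -1]

/-- The period lattice Λ = 2ω₁ℤ + 2ω₃ℤ. -/
def lattice (ω₁ ω₃ : ℂ) : Set ℂ :=
  {z | ∃ m n : ℤ, z = 2 * (m : ℂ) * ω₁ + 2 * (n : ℂ) * ω₃}

/-- Twisted double periodicity on a set `S`: `X (z + 2ω_a) = σ_a * X z * σ_a` for `a = 1,2,3`,
with `ω₂ = -ω₁ - ω₃`. -/
def TwistedPeriodicOn (ω₁ ω₃ : ℂ) (S : Set ℂ)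
    (X : ℂ → Matrix (Fin 2) (Fin 2) ℂ) : Prop :=
  (∀ z ∈ S, X (z + 2 * ω₁) = σ1 * X z * σ1) ∧
  (∀ z ∈ S, X (z + 2 * (-ω₁ - ω₃)) = σ2 * X z * σ2) ∧
  (∀ z ∈ S, X (z + 2 * ω₃) = σ3 * X z * σ3)

/-- The vacuum point `W₀`: functions holomorphic on `ℂ ∖ Λ` and twisted doubly periodic there. -/
def W0 (ω₁ ω₃ : ℂ) : Set (ℂ → Matrix (Fin 2) (Fin 2) ℂ) :=
  {X | DifferentiableOn ℂ X (lattice ω₁ ω₃)ᶜ ∧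
       TwistedPeriodicOn ω₁ ω₃ (lattice ω₁ ω₃)ᶜ X}

/-!
`W₀` is closed under pointwise products, and under pointwise inverses of its pointwise
invertible elements: holomorphy of `χ⁻¹ = det χ⁻¹ • adj χ` follows from that of the entries, and
conjugation by an involution `σ_a` is multiplicative and commutes with inversion. Hence
`X ↦ X χ` maps `W₀` onto itself, with inverse `Y ↦ Y χ⁻¹`.
-/

section MatrixCalculus

variable {𝕜 : Type*} [NontriviallyNormedField 𝕜] {m n : Type*} [Fintype n] {s : Set 𝕜}

theorem differentiableOn_matrix_iff {f : 𝕜 → Matrix m n 𝕜} :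
    DifferentiableOn 𝕜 f s ↔ ∀ i j, DifferentiableOn 𝕜 (fun x => f x i j) s :=
  (differentiableOn_pi (Φ := f)).trans <|
    forall_congr' fun i => differentiableOn_pi (Φ := fun x => f x i)

theorem DifferentiableOn.matrix_mul {l : Type*} [Fintype m] {f : 𝕜 → Matrix l m 𝕜}
    {g : 𝕜 → Matrix m n 𝕜}
    (hf : DifferentiableOn 𝕜 f s) (hg : DifferentiableOn 𝕜 g s) :
    DifferentiableOn 𝕜 (fun x => f x * g x) s := by
  rw [differentiableOn_matrix_iff] at hf hg ⊢
  intro i j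
  simp only [Matrix.mul_apply]
  exact DifferentiableOn.fun_sum fun k _ => (hf i k).mul (hg k j)

variable [DecidableEq n] {f : 𝕜 → Matrix n n 𝕜}

theorem DifferentiableOn.matrix_det (hf : DifferentiableOn 𝕜 f s) :
    DifferentiableOn 𝕜 (fun x => (f x).det) s := by
  rw [differentiableOn_matrix_iff] at hf
  simp only [Matrix.det_apply']
  exact DifferentiableOn.fun_sum fun σ _ =>
    (differentiableOn_const _).mul (DifferentiableOn.fun_finsetProd fun i _ => hf (σ i) i)

theorem DifferentiableOn.matrix_updateRow (hf : DifferentiableOn 𝕜 f s) (i : n) (v : n → 𝕜) :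
    DifferentiableOn 𝕜 (fun x => (f x).updateRow i v) s := by
  rw [differentiableOn_matrix_iff] at hf ⊢
  intro i' j
  by_cases h : i' = i
  · subst h
    simpa only [Matrix.updateRow_self] using differentiableOn_const (v j)
  · simpa only [Matrix.updateRow_ne h] using hf i' j

theorem DifferentiableOn.matrix_adjugate (hf : DifferentiableOn 𝕜 f s) :
    DifferentiableOn 𝕜 (fun x => (f x).adjugate) s := by
  rw [differentiableOn_matrix_iff]
  intro i j
  simp only [Matrix.adjugate_apply]
  exact (hf.matrix_updateRow j (Pi.single i 1)).matrix_det

theorem DifferentiableOn.matrix_inv (hf : DifferentiableOn 𝕜 f s)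
    (hdet : ∀ x ∈ s, (f x).det ≠ 0) :
    DifferentiableOn 𝕜 (fun x => (f x)⁻¹) s := by
  simp only [Matrix.inv_def, Ring.inverse_eq_inv']
  exact DifferentiableOn.smul (F := Matrix n n 𝕜) (hf.matrix_det.inv hdet) hf.matrix_adjugate

end MatrixCalculus

theorem conj_mul_conj_of_mul_self_eq_one {M : Type*} [Monoid M] {u : M} (hu : u * u = 1)
    (a b : M) : u * a * u * (u * b * u) = u * (a * b) * u := by
  calc u * a * u * (u * b * u) = u * a * (u * u) * b * u := by simp only [mul_assoc]
    _ = u * (a * b) * u := by rw [hu, mul_one, mul_assoc u a b]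

theorem Matrix.inv_conj_of_mul_self_eq_one {n α : Type*} [Fintype n] [DecidableEq n] [CommRing α]
    {u : Matrix n n α} (hu : u * u = 1) (A : Matrix n n α) :
    (u * A * u)⁻¹ = u * A⁻¹ * u := by
  rw [Matrix.mul_inv_rev, Matrix.mul_inv_rev, Matrix.inv_eq_right_inv hu, Matrix.mul_assoc]

theorem σ1_mul_self : σ1 * σ1 = 1 := by
  rw [σ1, Matrix.mul_fin_two, Matrix.one_fin_two]; norm_num

theorem σ2_mul_self : σ2 * σ2 = 1 := by
  rw [σ2, Matrix.mul_fin_two, Matrix.one_fin_two]; norm_num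

theorem σ3_mul_self : σ3 * σ3 = 1 := by
  rw [σ3, Matrix.mul_fin_two, Matrix.one_fin_two]; norm_num

section ConjugatePeriodic

variable {α M : Type*} [Add α] {S : Set α} {p : α} {f g : α → M}

theorem conjPeriodic_mul [Monoid M] {u : M} (hu : u * u = 1)
    (hf : ∀ z ∈ S, f (z + p) = u * f z * u) (hg : ∀ z ∈ S, g (z + p) = u * g z * u) :
    ∀ z ∈ S, f (z + p) * g (z + p) = u * (f z * g z) * u := fun z hz => by
  rw [hf z hz, hg z hz, conj_mul_conj_of_mul_self_eq_one hu]

theorem conjPeriodic_inv {n R : Type*} [Fintype n] [DecidableEq n] [CommRing R]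
    {f : α → Matrix n n R} {u : Matrix n n R} (hu : u * u = 1)
    (hf : ∀ z ∈ S, f (z + p) = u * f z * u) :
    ∀ z ∈ S, (f (z + p))⁻¹ = u * (f z)⁻¹ * u := fun z hz => by
  rw [hf z hz, Matrix.inv_conj_of_mul_self_eq_one hu]

end ConjugatePeriodic

namespace TwistedPeriodicOn

variable {ω₁ ω₃ : ℂ} {S : Set ℂ} {f g : ℂ → Matrix (Fin 2) (Fin 2) ℂ}

theorem mul (hf : TwistedPeriodicOn ω₁ ω₃ S f) (hg : TwistedPeriodicOn ω₁ ω₃ S g) :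
    TwistedPeriodicOn ω₁ ω₃ S (fun z => f z * g z) :=
  ⟨conjPeriodic_mul σ1_mul_self hf.1 hg.1, conjPeriodic_mul σ2_mul_self hf.2.1 hg.2.1,
    conjPeriodic_mul σ3_mul_self hf.2.2 hg.2.2⟩

theorem inv (hf : TwistedPeriodicOn ω₁ ω₃ S f) :
    TwistedPeriodicOn ω₁ ω₃ S (fun z => (f z)⁻¹) :=
  ⟨conjPeriodic_inv σ1_mul_self hf.1, conjPeriodic_inv σ2_mul_self hf.2.1,
    conjPeriodic_inv σ3_mul_self hf.2.2⟩

end TwistedPeriodicOn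

section W0

variable {ω₁ ω₃ : ℂ} {X Y : ℂ → Matrix (Fin 2) (Fin 2) ℂ}

theorem mul_mem_W0 (hX : X ∈ W0 ω₁ ω₃) (hY : Y ∈ W0 ω₁ ω₃) :
    (fun z => X z * Y z) ∈ W0 ω₁ ω₃ :=
  ⟨hX.1.matrix_mul hY.1, hX.2.mul hY.2⟩

theorem inv_mem_W0 (hX : X ∈ W0 ω₁ ω₃) (hdet : ∀ z ∈ (lattice ω₁ ω₃)ᶜ, (X z).det ≠ 0) :
    (fun z => (X z)⁻¹) ∈ W0 ω₁ ω₃ :=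
  ⟨hX.1.matrix_inv hdet, hX.2.inv⟩

end W0

theorem W0_mul_chi_eq_W0_general (ω₁ ω₃ : ℂ)
    (χ : ℂ → Matrix (Fin 2) (Fin 2) ℂ) (hχ : χ ∈ W0 ω₁ ω₃)
    (hinv : ∀ z ∈ (lattice ω₁ ω₃)ᶜ, IsUnit (χ z)) :
    (fun X : ℂ → Matrix (Fin 2) (Fin 2) ℂ =>
        ((lattice ω₁ ω₃)ᶜ).restrict (fun z => X z * χ z)) '' W0 ω₁ ω₃
      = ((lattice ω₁ ω₃)ᶜ).restrict '' W0 ω₁ ω₃ := by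
  have hdet : ∀ z ∈ (lattice ω₁ ω₃)ᶜ, IsUnit (χ z).det := fun z hz =>
    (Matrix.isUnit_iff_isUnit_det _).1 (hinv z hz)
  ext g
  constructor
  · rintro ⟨X, hX, rfl⟩
    exact ⟨_, mul_mem_W0 hX hχ, rfl⟩
  · rintro ⟨Y, hY, rfl⟩
    have hχinv := inv_mem_W0 hχ fun z hz => (hdet z hz).ne_zero
    refine ⟨fun z => Y z * (χ z)⁻¹, mul_mem_W0 hY hχinv, ?_⟩
    funext z
    exact Matrix.nonsing_inv_mul_cancel_right _ _ (hdet z z.2)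

/-- Lemma 2: `W₀ χ = W₀` for `χ ∈ W₀` pointwise invertible on `ℂ ∖ Λ`,
as sets of functions on `ℂ ∖ Λ`. -/
theorem W0_mul_chi_eq_W0 (ω₁ ω₃ : ℂ)
    (hind : LinearIndependent ℝ ![ω₁, ω₃])
    (χ : ℂ → Matrix (Fin 2) (Fin 2) ℂ) (hχ : χ ∈ W0 ω₁ ω₃)
    (hinv : ∀ z ∈ (lattice ω₁ ω₃)ᶜ, IsUnit (χ z)) :
    (fun X : ℂ → Matrix (Fin 2) (Fin 2) ℂ =>
        ((lattice ω₁ ω₃)ᶜ).restrict (fun z => X z * χ z)) '' W0 ω₁ ω₃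
      = ((lattice ω₁ ω₃)ᶜ).restrict '' W0 ω₁ ω₃ :=
  W0_mul_chi_eq_W0_general ω₁ ω₃ χ hχ hinv
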